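/- Let W ∈ ℝ^{r×r} be diagonal with W₁₁ ≥ W₂₂ ≥ ⋯ ≥ W_{rr} > 0, let X ∈ ℝ^{m×n} have rank s with s ≤ r, and let X = U·Σ_X·Vᵀ be a reduced singular value decomposition, where U ∈ ℝ^{m×s} and V ∈ ℝ^{n×s} have orthonormal columns and Σ_X = diag(σ₁, …, σ_s) with σ₁ ≥ ⋯ ≥ σ_s > 0. Let W_X = diag(W₁₁, …, W_{ss}), and define Â = [U·Σ_X^{1/3}·W_X^{2/3} , 0] ∈ ℝ^{m×r} and B̂ = [V·Σ_X^{2/3}·W_X^{-2/3} , 0] ∈ ℝ^{n×r} (padding with zero columns). Then Â·B̂ᵀ = X and (1/3)(‖Â·W^{-1}‖_F² + 2‖B̂‖_*) = Σ_{i=1}^{s} (σ_i / W_{ii})^{2/3}. -/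

import Mathlib

open Matrix

/-- The singular values of a real `m × n` matrix, indexed by the columns:
the square roots of the eigenvalues of `Aᵀ * A`. -/
noncomputable def singularValues {m n : ℕ} (A : Matrix (Fin m) (Fin n) ℝ) : Fin n → ℝ :=
  fun i => Real.sqrt ((Matrix.isHermitian_conjTranspose_mul_self A).eigenvalues i)

/-- The nuclear norm: the sum of the singular values. -/
noncomputable def nuclearNorm {m n : ℕ} (A : Matrix (Fin m) (Fin n) ℝ) : ℝ :=
  ∑ j, singularValues A j

/-- Squared Frobenius norm. -/
noncomputable def frobSq {m n : ℕ} (A : Matrix (Fin m) (Fin n) ℝ) : ℝ :=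
  ∑ i, ∑ j, (A i j) ^ 2

/-- Pad a matrix with zero columns on the right. -/
def padCols {m s r : ℕ} (h : s ≤ r) (M : Matrix (Fin m) (Fin s) ℝ) :
    Matrix (Fin m) (Fin r) ℝ :=
  Matrix.of fun i j => if hj : (j : ℕ) < s then M i ⟨j, hj⟩ else 0

/-!
`Â` and `B̂` are `U` and `V` times diagonal matrices, padded by zero columns, and their diagonal
entries multiply to `σᵢ`, which gives `Â B̂ᵀ = X`. As `U` and `V` have orthonormal columns, the
columns of `Â W⁻¹` and of `B̂` are orthogonal: `B̂ᵀ B̂` is diagonal, so the singular values of `B̂`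
are its column norms, and `‖Â W⁻¹‖_F²` is the sum of the squared column norms. With
`tᵢ = (σᵢ / Wᵢᵢ)^{1/3}`, both quantities equal `∑ᵢ tᵢ²`.
-/

namespace Matrix.IsHermitian

variable {ι : Type*} [Fintype ι] [DecidableEq ι]

lemma sum_comp_eigenvalues_of_eq_diagonal {A : Matrix ι ι ℝ} (hA : A.IsHermitian) {d : ι → ℝ}
    (hAd : A = diagonal d) (f : ℝ → ℝ) : ∑ i, f (hA.eigenvalues i) = ∑ i, f (d i) := by
  subst hAd
  have hroots := hA.roots_charpoly_eq_eigenvalues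
  rw [charpoly_diagonal, Polynomial.roots_prod _ _ (by
    simp [Finset.prod_ne_zero_iff, Polynomial.X_sub_C_ne_zero])] at hroots
  simpa [Multiset.map_map] using congrArg (fun t => (t.map f).sum) hroots.symm

end Matrix.IsHermitian

lemma nuclearNorm_of_transpose_mul_self_eq_diagonal {m n : ℕ} {A : Matrix (Fin m) (Fin n) ℝ}
    {d : Fin n → ℝ} (hA : Aᵀ * A = diagonal d) : nuclearNorm A = ∑ j, √(d j) :=
  (isHermitian_conjTranspose_mul_self A).sum_comp_eigenvalues_of_eq_diagonal
    (by rwa [conjTranspose_eq_transpose_of_trivial]) _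

lemma frobSq_eq_trace {m n : ℕ} (A : Matrix (Fin m) (Fin n) ℝ) : frobSq A = (Aᵀ * A).trace := by
  simp only [frobSq, trace, diag, mul_apply, transpose_apply, sq]
  exact Finset.sum_comm

lemma transpose_mul_self_of_orthonormal_mul_diagonal {m s : ℕ} {U : Matrix (Fin m) (Fin s) ℝ}
    (hU : Uᵀ * U = 1) (c : Fin s → ℝ) :
    (U * diagonal c)ᵀ * (U * diagonal c) = diagonal (c * c) := by
  rw [transpose_mul, diagonal_transpose, Matrix.mul_assoc, ← Matrix.mul_assoc Uᵀ, hU,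
    Matrix.one_mul, diagonal_mul_diagonal, Pi.mul_def]

lemma inv_diagonal_of_ne_zero {n : ℕ} {w : Fin n → ℝ} (hw : ∀ i, w i ≠ 0) :
    (diagonal w)⁻¹ = diagonal w⁻¹ :=
  inv_eq_left_inv <| by
    rw [diagonal_mul_diagonal, ← diagonal_one]
    exact congrArg diagonal (funext fun i => inv_mul_cancel₀ (hw i))

section Padding

variable {m n s r : ℕ}

def padVec (v : Fin s → ℝ) : Fin r → ℝ :=
  fun j => if hj : (j : ℕ) < s then v ⟨j, hj⟩ else 0

lemma padCols_apply (h : s ≤ r) (M : Matrix (Fin m) (Fin s) ℝ) (i : Fin m) (j : Fin r) :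
    padCols h M i j = padVec (M i) j := rfl

lemma padVec_mul_padVec (u v : Fin s → ℝ) (j : Fin r) :
    padVec u j * padVec v j = padVec (u * v) j := by
  unfold padVec
  split_ifs <;> simp

lemma sum_comp_padVec (h : s ≤ r) {f : ℝ → ℝ} (hf : f 0 = 0) (v : Fin s → ℝ) :
    ∑ j : Fin r, f (padVec v j) = ∑ k, f (v k) := by
  let g : ℕ → ℝ := fun n => f (if hn : n < s then v ⟨n, hn⟩ else 0)
  have hr : ∑ j : Fin r, f (padVec v j) = ∑ n ∈ Finset.range r, g n :=
    Fin.sum_univ_eq_sum_range g r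
  have hs : ∑ k, f (v k) = ∑ n ∈ Finset.range s, g n := by
    rw [← Fin.sum_univ_eq_sum_range g s]
    simp [g]
  rw [hr, hs]
  refine (Finset.sum_subset (Finset.range_subset_range.2 h) fun n _ hn => ?_).symm
  simp [g, hf, Finset.mem_range.not.1 hn]

lemma padCols_mul_transpose_padCols (h : s ≤ r) (A : Matrix (Fin m) (Fin s) ℝ)
    (B : Matrix (Fin n) (Fin s) ℝ) : padCols h A * (padCols h B)ᵀ = A * Bᵀ := by
  ext i j
  simp only [mul_apply, transpose_apply, padCols_apply, padVec_mul_padVec]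
  exact sum_comp_padVec h (f := id) rfl _

lemma transpose_padCols_mul_padCols (h : s ≤ r) {A : Matrix (Fin m) (Fin s) ℝ} {d : Fin s → ℝ}
    (hA : Aᵀ * A = diagonal d) : (padCols h A)ᵀ * padCols h A = diagonal (padVec d) := by
  ext j j'
  simp only [mul_apply, transpose_apply, padCols_apply, diagonal_apply, padVec]
  by_cases hj : (j : ℕ) < s <;> by_cases hj' : (j' : ℕ) < s
  · have := congrFun (congrFun hA ⟨j, hj⟩) ⟨j', hj'⟩
    simp only [mul_apply, transpose_apply, diagonal_apply, Fin.mk.injEq] at this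
    simp [hj, hj', this, Fin.ext_iff]
  · simp [hj, hj', Fin.ext_iff]
    omega
  · simp [hj, hj', Fin.ext_iff]
  · simp [hj, hj']

lemma padCols_mul_diagonal (h : s ≤ r) (M : Matrix (Fin m) (Fin s) ℝ) (d : Fin r → ℝ) :
    padCols h M * diagonal d = padCols h (M * diagonal (fun k => d (Fin.castLE h k))) := by
  ext i j
  simp only [mul_diagonal, padCols_apply, padVec]
  split_ifs <;> simp

lemma frobSq_padCols (h : s ≤ r) (M : Matrix (Fin m) (Fin s) ℝ) :
    frobSq (padCols h M) = frobSq M :=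
  Finset.sum_congr rfl fun i _ => sum_comp_padVec h (f := (· ^ 2)) (zero_pow two_ne_zero) (M i)

lemma frobSq_padCols_mul_inv_diagonal (h : s ≤ r) {U : Matrix (Fin m) (Fin s) ℝ}
    (hU : Uᵀ * U = 1) (a : Fin s → ℝ) {w : Fin r → ℝ} (hw : ∀ i, w i ≠ 0) :
    frobSq (padCols h (U * diagonal a) * (diagonal w)⁻¹) = ∑ k, (a k / w (Fin.castLE h k)) ^ 2 := by
  rw [inv_diagonal_of_ne_zero hw, padCols_mul_diagonal, Matrix.mul_assoc, diagonal_mul_diagonal,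
    frobSq_padCols, frobSq_eq_trace, transpose_mul_self_of_orthonormal_mul_diagonal hU,
    trace_diagonal]
  simp only [Pi.mul_apply, Pi.inv_apply, div_eq_mul_inv, sq]

lemma nuclearNorm_padCols_mul_diagonal (h : s ≤ r) {V : Matrix (Fin n) (Fin s) ℝ}
    (hV : Vᵀ * V = 1) {b : Fin s → ℝ} (hb : ∀ k, 0 ≤ b k) :
    nuclearNorm (padCols h (V * diagonal b)) = ∑ k, b k := by
  rw [nuclearNorm_of_transpose_mul_self_eq_diagonal
      (transpose_padCols_mul_padCols h (transpose_mul_self_of_orthonormal_mul_diagonal hV b)),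
    sum_comp_padVec h Real.sqrt_zero]
  exact Finset.sum_congr rfl fun k _ => Real.sqrt_mul_self (hb k)

end Padding

lemma rpow_two_thirds_eq_sq {x : ℝ} (hx : 0 ≤ x) : x ^ (2 / 3 : ℝ) = (x ^ (1 / 3 : ℝ)) ^ 2 := by
  rw [← Real.rpow_natCast, ← Real.rpow_mul hx]
  norm_num

lemma rpow_one_third_pow_three {x : ℝ} (hx : 0 ≤ x) : (x ^ (1 / 3 : ℝ)) ^ 3 = x := by
  rw [← Real.rpow_natCast, ← Real.rpow_mul hx]
  norm_num

lemma rpow_one_third_mul_rpow_two_thirds_mul {p q : ℝ} (hp : 0 ≤ p) (hq : 0 < q) :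
    p ^ (1 / 3 : ℝ) * q ^ (2 / 3 : ℝ) * (p ^ (2 / 3 : ℝ) * (q ^ (2 / 3 : ℝ))⁻¹) = p := by
  have hv : 0 < q ^ (1 / 3 : ℝ) := Real.rpow_pos_of_pos hq _
  rw [rpow_two_thirds_eq_sq hp, rpow_two_thirds_eq_sq hq.le]
  calc _ = (p ^ (1 / 3 : ℝ)) ^ 3 := by field_simp
    _ = p := rpow_one_third_pow_three hp

lemma sq_rpow_one_third_mul_rpow_two_thirds_div {p q : ℝ} (hp : 0 ≤ p) (hq : 0 < q) :
    (p ^ (1 / 3 : ℝ) * q ^ (2 / 3 : ℝ) / q) ^ 2 = (p / q) ^ (2 / 3 : ℝ) := by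
  have hv : 0 < q ^ (1 / 3 : ℝ) := Real.rpow_pos_of_pos hq _
  rw [Real.div_rpow hp hq.le, rpow_two_thirds_eq_sq hp, rpow_two_thirds_eq_sq hq.le]
  nth_rewrite 2 [← rpow_one_third_pow_three hq.le]
  field_simp

theorem stmt13_general {m n r s : ℕ}
    (w : Fin r → ℝ) (hw_pos : ∀ i, 0 < w i)
    (X : Matrix (Fin m) (Fin n) ℝ) (hsr : s ≤ r)
    (U : Matrix (Fin m) (Fin s) ℝ) (V : Matrix (Fin n) (Fin s) ℝ)
    (hU : Uᵀ * U = 1) (hV : Vᵀ * V = 1)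
    (σ : Fin s → ℝ) (hσ_pos : ∀ i, 0 < σ i)
    (hX : X = U * Matrix.diagonal σ * Vᵀ) :
    (padCols hsr (U * Matrix.diagonal
        (fun k => σ k ^ ((1 : ℝ)/3) * w (Fin.castLE hsr k) ^ ((2 : ℝ)/3))) *
      (padCols hsr (V * Matrix.diagonal
        (fun k => σ k ^ ((2 : ℝ)/3) * (w (Fin.castLE hsr k) ^ ((2 : ℝ)/3))⁻¹)))ᵀ = X) ∧
    (1/3) * (frobSq (padCols hsr (U * Matrix.diagonal
        (fun k => σ k ^ ((1 : ℝ)/3) * w (Fin.castLE hsr k) ^ ((2 : ℝ)/3))) *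
          (Matrix.diagonal w)⁻¹) +
      2 * nuclearNorm (padCols hsr (V * Matrix.diagonal
        (fun k => σ k ^ ((2 : ℝ)/3) * (w (Fin.castLE hsr k) ^ ((2 : ℝ)/3))⁻¹)))) =
      ∑ i, (σ i / w (Fin.castLE hsr i)) ^ ((2 : ℝ)/3) := by
  have hσ : (fun k => σ k ^ ((1 : ℝ) / 3) * w (Fin.castLE hsr k) ^ ((2 : ℝ) / 3) *
      (σ k ^ ((2 : ℝ) / 3) * (w (Fin.castLE hsr k) ^ ((2 : ℝ) / 3))⁻¹)) = σ :=
    funext fun k => rpow_one_third_mul_rpow_two_thirds_mul (hσ_pos k).le (hw_pos _)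
  refine ⟨?_, ?_⟩
  · rw [padCols_mul_transpose_padCols, transpose_mul, diagonal_transpose, ← Matrix.mul_assoc,
      Matrix.mul_assoc U, diagonal_mul_diagonal, hσ, hX]
  · have hb k : 0 ≤ σ k ^ ((2 : ℝ) / 3) * (w (Fin.castLE hsr k) ^ ((2 : ℝ) / 3))⁻¹ := by
      have := hσ_pos k
      have := hw_pos (Fin.castLE hsr k)
      positivity
    rw [frobSq_padCols_mul_inv_diagonal hsr hU _ fun i => (hw_pos i).ne',
      nuclearNorm_padCols_mul_diagonal hsr hV hb]
    simp only [sq_rpow_one_third_mul_rpow_two_thirds_div (hσ_pos _).le (hw_pos _),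
      ← div_eq_mul_inv, ← Real.div_rpow (hσ_pos _).le (hw_pos _).le]
    ring

/-- With `Â = [U Σ_X^{1/3} W_X^{2/3}, 0]` and `B̂ = [V Σ_X^{2/3} W_X^{-2/3}, 0]`,
one has `Â B̂ᵀ = X` and `(1/3)(‖Â W⁻¹‖_F² + 2‖B̂‖_*) = ∑ᵢ (σᵢ / Wᵢᵢ)^{2/3}`. -/
theorem stmt13 {m n r s : ℕ}
    (w : Fin r → ℝ) (hw_pos : ∀ i, 0 < w i) (hw_mono : Antitone w)
    (X : Matrix (Fin m) (Fin n) ℝ) (hrank : X.rank = s) (hsr : s ≤ r)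
    (U : Matrix (Fin m) (Fin s) ℝ) (V : Matrix (Fin n) (Fin s) ℝ)
    (hU : Uᵀ * U = 1) (hV : Vᵀ * V = 1)
    (σ : Fin s → ℝ) (hσ_pos : ∀ i, 0 < σ i) (hσ_mono : Antitone σ)
    (hX : X = U * Matrix.diagonal σ * Vᵀ) :
    (padCols hsr (U * Matrix.diagonal
        (fun k => σ k ^ ((1 : ℝ)/3) * w (Fin.castLE hsr k) ^ ((2 : ℝ)/3))) *
      (padCols hsr (V * Matrix.diagonal
        (fun k => σ k ^ ((2 : ℝ)/3) * (w (Fin.castLE hsr k) ^ ((2 : ℝ)/3))⁻¹)))ᵀ = X) ∧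
    (1/3) * (frobSq (padCols hsr (U * Matrix.diagonal
        (fun k => σ k ^ ((1 : ℝ)/3) * w (Fin.castLE hsr k) ^ ((2 : ℝ)/3))) *
          (Matrix.diagonal w)⁻¹) +
      2 * nuclearNorm (padCols hsr (V * Matrix.diagonal
        (fun k => σ k ^ ((2 : ℝ)/3) * (w (Fin.castLE hsr k) ^ ((2 : ℝ)/3))⁻¹)))) =
      ∑ i, (σ i / w (Fin.castLE hsr i)) ^ ((2 : ℝ)/3) :=
  stmt13_general w hw_pos X hsr U V hU hV σ hσ_pos hX
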